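/- arXiv:2502.03267 — 2 statements merged into one kernel-verified Lean document; each statement's English description precedes it below -/
import Mathlib

section
/- Let n ≥ 1 and δ ∈ (0, n], and let f ∈ nL¹(ℝⁿ, H̃^δ_∞). If (f_i)_{i≥1} is a sequence of functions in nL¹(ℝⁿ, H̃^δ_∞) such that ∫_{ℝⁿ} |f − f_i| dH̃^δ_∞ → 0 as i → ∞, then there exists a subsequence (f_{i_j}) which converges to f pointwise H̃^δ_∞-almost everywhere on ℝⁿ. -/
open MeasureTheory Set Metric Filter Topology
open scoped ENNReal

noncomputable section

/-- Euclidean space `ℝⁿ`. -/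
abbrev En (n : ℕ) : Type := EuclideanSpace ℝ (Fin n)

/-- The half-open dyadic cube `2^k (m + [0,1)ⁿ)`, `k : ℤ`, `m : ℤⁿ`. -/
def dyadicCube (n : ℕ) (k : ℤ) (m : Fin n → ℤ) : Set (En n) :=
  {x | ∀ i, (m i : ℝ) * 2 ^ k ≤ x i ∧ x i < ((m i : ℝ) + 1) * 2 ^ k}

/-- The `δ`-dimensional dyadic Hausdorff content `H̃^δ_∞`: the infimum of `Σ ℓ(Q_i)^δ`
over all countable collections of dyadic cubes whose union's interior covers `E`. -/
def dyadicContent (n : ℕ) (δ : ℝ) (E : Set (En n)) : ℝ≥0∞ :=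
  ⨅ (c : ℕ → ℤ × (Fin n → ℤ))
    (_ : E ⊆ interior (⋃ i, dyadicCube n (c i).1 (c i).2)),
    ∑' i, ENNReal.ofReal (((2 : ℝ) ^ (c i).1) ^ δ)

/-- The Choquet integral `∫_Ω f dH̃^δ_∞ := ∫_0^∞ H̃^δ_∞({x ∈ Ω : f x > t}) dt`
of a `[0,∞]`-valued function over `Ω ⊆ ℝⁿ`. -/
def choquetIntegral (n : ℕ) (δ : ℝ) (Ω : Set (En n)) (f : En n → ℝ≥0∞) : ℝ≥0∞ :=
  ∫⁻ t in Ioi (0 : ℝ), dyadicContent n δ {x | x ∈ Ω ∧ ENNReal.ofReal t < f x}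

/-- The Choquet integral `∫_Ω |f| dH̃^δ_∞` of a real-valued function. -/
def choquetIntegralAbs (n : ℕ) (δ : ℝ) (Ω : Set (En n)) (f : En n → ℝ) : ℝ≥0∞ :=
  choquetIntegral n δ Ω (fun x => ENNReal.ofReal |f x|)

/-- The Choquet integral `∫_Ω |f| dH̃^δ_∞` of an extended-real-valued function. -/
def choquetIntegralEAbs (n : ℕ) (δ : ℝ) (Ω : Set (En n)) (f : En n → EReal) : ℝ≥0∞ :=
  choquetIntegral n δ Ω (fun x => (f x).abs)

/-- The ball average `f^δ_{B(x,r)} := (1/H̃^δ_∞(B(x,r))) ∫_{B(x,r)} f dH̃^δ_∞`. -/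
def ballAvg (n : ℕ) (δ : ℝ) (f : En n → ℝ≥0∞) (x : En n) (r : ℝ) : ℝ≥0∞ :=
  choquetIntegral n δ (ball x r) f / dyadicContent n δ (ball x r)

/-- The Hausdorff-content centred maximal function `M^δ f(x)`. -/
def maximal (n : ℕ) (δ : ℝ) (f : En n → ℝ≥0∞) (x : En n) : ℝ≥0∞ :=
  ⨆ (r : ℝ) (_ : 0 < r), ballAvg n δ f x r

/-- `f^δ_*(x) := limsup_{r→0⁺} (1/H̃^δ_∞(B(x,r))) ∫_{B(x,r)} |f(y) − f(x)| dH̃^δ_∞(y)`. -/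
def lebDev (n : ℕ) (δ : ℝ) (f : En n → ℝ) (x : En n) : ℝ≥0∞ :=
  limsup (fun r : ℝ => choquetIntegralAbs n δ (ball x r) (fun y => f y - f x) /
    dyadicContent n δ (ball x r)) (𝓝[>] (0 : ℝ))

/-- `limsup_{r→0⁺} f^δ_{B(x,r)}` of the ball averages. -/
def limsupAvg (n : ℕ) (δ : ℝ) (f : En n → ℝ≥0∞) (x : En n) : ℝ≥0∞ :=
  limsup (fun r : ℝ => ballAvg n δ f x r) (𝓝[>] (0 : ℝ))

/-!
Pick a subsequence with `∫ |f - F (φ j)| dH̃^δ_∞ < 4⁻ʲ`. By Chebyshev's inequality for the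
Choquet integral, the sets `{|f - F (φ j)| > 2⁻ʲ}` have content at most `2⁻ʲ`. The content is
countably subadditive, so the Borel–Cantelli argument applies: the points lying in infinitely
many of these sets form a set of content zero, and off it `F (φ j) → f`.
-/

section DyadicContent

variable {n : ℕ} {δ : ℝ}

lemma dyadicContent_mono {E F : Set (En n)} (h : E ⊆ F) :
    dyadicContent n δ E ≤ dyadicContent n δ F :=
  le_iInf₂ fun c hc => iInf₂_le c (h.trans hc)

lemma exists_dyadicCover_tsum_lt {E : Set (En n)} {r : ℝ≥0∞} (h : dyadicContent n δ E < r) :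
    ∃ c : ℕ → ℤ × (Fin n → ℤ), E ⊆ interior (⋃ i, dyadicCube n (c i).1 (c i).2) ∧
      ∑' i, ENNReal.ofReal (((2 : ℝ) ^ (c i).1) ^ δ) < r := by
  simpa only [dyadicContent, iInf_lt_iff, exists_prop] using h

lemma dyadicContent_iUnion_le (A : ℕ → Set (En n)) :
    dyadicContent n δ (⋃ i, A i) ≤ ∑' i, dyadicContent n δ (A i) := by
  refine ENNReal.le_of_forall_pos_le_add fun ε hε hlt => ?_
  obtain ⟨η, hη, hηsum⟩ := ENNReal.exists_pos_sum_of_countable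
    (ENNReal.coe_ne_zero.mpr hε.ne') ℕ
  have hcover : ∀ i, ∃ c : ℕ → ℤ × (Fin n → ℤ),
      A i ⊆ interior (⋃ j, dyadicCube n (c j).1 (c j).2) ∧
      ∑' j, ENNReal.ofReal (((2 : ℝ) ^ (c j).1) ^ δ) < dyadicContent n δ (A i) + η i := by
    intro i
    refine exists_dyadicCover_tsum_lt (ENNReal.lt_add_right ?_ (by simpa using (hη i).ne'))
    exact ne_top_of_le_ne_top hlt.ne (ENNReal.le_tsum i)
  choose c hc hcsum using hcover
  let d : ℕ → ℤ × (Fin n → ℤ) := fun k => c (Nat.unpair k).1 (Nat.unpair k).2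
  have hd : (⋃ i, A i) ⊆ interior (⋃ k, dyadicCube n (d k).1 (d k).2) := by
    refine iUnion_subset fun i => (hc i).trans (interior_mono (iUnion_subset fun j => ?_))
    have hk : d (Nat.pair i j) = c i j := by simp [d]
    exact hk ▸ subset_iUnion (fun k => dyadicCube n (d k).1 (d k).2) (Nat.pair i j)
  calc dyadicContent n δ (⋃ i, A i)
      ≤ ∑' k, ENNReal.ofReal (((2 : ℝ) ^ (d k).1) ^ δ) := iInf₂_le d hd
    _ = ∑' p : ℕ × ℕ, ENNReal.ofReal (((2 : ℝ) ^ (c p.1 p.2).1) ^ δ) :=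
        (Nat.pairEquiv.symm.tsum_eq
          fun p : ℕ × ℕ => ENNReal.ofReal (((2 : ℝ) ^ (c p.1 p.2).1) ^ δ))
    _ = ∑' i, ∑' j, ENNReal.ofReal (((2 : ℝ) ^ (c i j).1) ^ δ) :=
        ENNReal.tsum_prod (f := fun i j => ENNReal.ofReal (((2 : ℝ) ^ (c i j).1) ^ δ))
    _ ≤ ∑' i, (dyadicContent n δ (A i) + η i) := ENNReal.tsum_le_tsum fun i => (hcsum i).le
    _ ≤ ∑' i, dyadicContent n δ (A i) + ε := by rw [ENNReal.tsum_add]; gcongr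

lemma dyadicContent_limsup_eq_zero {A : ℕ → Set (En n)}
    (hA : ∑' j, dyadicContent n δ (A j) ≠ ∞) :
    dyadicContent n δ (limsup A atTop) = 0 := by
  have htail : ∀ N,
      dyadicContent n δ (limsup A atTop) ≤ ∑' k, dyadicContent n δ (A (k + N)) := by
    intro N
    refine (dyadicContent_mono fun x hx => ?_).trans (dyadicContent_iUnion_le _)
    obtain ⟨i, hxi, hNi⟩ :=
      (mem_limsup_iff_frequently_mem.mp hx).and_eventually (eventually_ge_atTop N) |>.exists
    exact mem_iUnion.mpr ⟨i - N, by rwa [Nat.sub_add_cancel hNi]⟩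
  exact nonpos_iff_eq_zero.mp (ge_of_tendsto' (ENNReal.tendsto_sum_nat_add _ hA) htail)

end DyadicContent

lemma ofReal_mul_dyadicContent_le_choquetIntegral {n : ℕ} {δ : ℝ} (Ω : Set (En n))
    (f : En n → ℝ≥0∞) (ε : ℝ) :
    ENNReal.ofReal ε * dyadicContent n δ {x | x ∈ Ω ∧ ENNReal.ofReal ε < f x}
      ≤ choquetIntegral n δ Ω f := by
  have hlevel : ∀ t ∈ Ioo 0 ε, dyadicContent n δ {x | x ∈ Ω ∧ ENNReal.ofReal ε < f x}
      ≤ dyadicContent n δ {x | x ∈ Ω ∧ ENNReal.ofReal t < f x} :=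
    fun t ht => dyadicContent_mono fun x hx =>
      ⟨hx.1, lt_trans (ENNReal.ofReal_lt_ofReal_iff'.mpr ⟨ht.2, ht.1.trans ht.2⟩) hx.2⟩
  calc ENNReal.ofReal ε * dyadicContent n δ {x | x ∈ Ω ∧ ENNReal.ofReal ε < f x}
      = ∫⁻ _ in Ioo 0 ε, dyadicContent n δ {x | x ∈ Ω ∧ ENNReal.ofReal ε < f x} := by
        rw [setLIntegral_const, Real.volume_Ioo, sub_zero, mul_comm]
    _ ≤ ∫⁻ t in Ioo 0 ε, dyadicContent n δ {x | x ∈ Ω ∧ ENNReal.ofReal t < f x} :=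
        setLIntegral_mono' measurableSet_Ioo hlevel
    _ ≤ choquetIntegral n δ Ω f := lintegral_mono_set Ioo_subset_Ioi_self

lemma ofReal_mul_dyadicContent_le_choquetIntegralAbs {n : ℕ} {δ : ℝ} (g : En n → ℝ)
    {ε : ℝ} (hε : 0 ≤ ε) :
    ENNReal.ofReal ε * dyadicContent n δ {x | ε < |g x|} ≤ choquetIntegralAbs n δ univ g := by
  simpa only [choquetIntegralAbs, mem_univ, true_and, ENNReal.ofReal_lt_ofReal_iff_of_nonneg hε]
    using ofReal_mul_dyadicContent_le_choquetIntegral (δ := δ) univ (ENNReal.ofReal |g ·|) ε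

lemma exists_dyadicContent_eq_zero_tendsto {n : ℕ} {δ : ℝ} {f : En n → ℝ}
    {G : ℕ → En n → ℝ} {ε : ℕ → ℝ} (hε : Tendsto ε atTop (𝓝 0))
    (hsum : ∑' j, dyadicContent n δ {x | ε j < |f x - G j x|} ≠ ∞) :
    ∃ E : Set (En n), dyadicContent n δ E = 0 ∧
      ∀ x ∉ E, Tendsto (fun j => G j x) atTop (𝓝 (f x)) := by
  refine ⟨_, dyadicContent_limsup_eq_zero hsum, fun x hx => ?_⟩
  have hclose : ∀ᶠ j in atTop, ‖G j x - f x‖ ≤ ε j := by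
    simpa [mem_limsup_iff_frequently_mem, Filter.Frequently, Real.norm_eq_abs, abs_sub_comm]
      using hx
  exact tendsto_iff_norm_sub_tendsto_zero.mpr (squeeze_zero_norm' (by simpa using hclose) hε)

theorem nL1_convergence_subsequence_general (n : ℕ) (δ : ℝ) (f : En n → ℝ) (F : ℕ → En n → ℝ)
    (hconv : Tendsto (fun i => choquetIntegralAbs n δ univ (fun x => f x - F i x))
      atTop (𝓝 0)) :
    ∃ φ : ℕ → ℕ, StrictMono φ ∧
      ∃ E : Set (En n), dyadicContent n δ E = 0 ∧
        ∀ x ∉ E, Tendsto (fun j => F (φ j) x) atTop (𝓝 (f x)) := by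
  let ε : ℕ → ℝ := fun j => 2⁻¹ ^ j
  have hε : ∀ j, 0 < ε j := fun j => by positivity
  have hε' : ∀ j, ENNReal.ofReal (ε j) ≠ 0 := fun j => (ENNReal.ofReal_pos.mpr (hε j)).ne'
  obtain ⟨φ, hφ, hφconv⟩ := extraction_forall_of_eventually fun j =>
    hconv.eventually_lt_const (ENNReal.mul_pos (hε' j) (hε' j))
  have hcontent : ∀ j,
      dyadicContent n δ {x | ε j < |f x - F (φ j) x|} ≤ ENNReal.ofReal (ε j) := by
    intro j
    refine ((ENNReal.mul_lt_mul_iff_right (hε' j) ENNReal.ofReal_ne_top).mp ?_).le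
    exact (ofReal_mul_dyadicContent_le_choquetIntegralAbs _ (hε j).le).trans_lt (hφconv j)
  have hsum : ∑' j, dyadicContent n δ {x | ε j < |f x - F (φ j) x|} ≠ ∞ := by
    refine ne_top_of_le_ne_top ?_ (ENNReal.tsum_le_tsum hcontent)
    rw [← ENNReal.ofReal_tsum_of_nonneg (fun j => (hε j).le)
      (summable_geometric_of_lt_one (by norm_num) (by norm_num))]
    exact ENNReal.ofReal_ne_top
  exact ⟨φ, hφ, exists_dyadicContent_eq_zero_tendsto
    (tendsto_pow_atTop_nhds_zero_of_lt_one (by norm_num) (by norm_num)) hsum⟩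

/-- convergence in the `nL¹(ℝⁿ, H̃^δ_∞)` norm implies the existence of a
subsequence converging pointwise `H̃^δ_∞`-almost everywhere. -/
theorem nL1_convergence_subsequence (n : ℕ) (hn : 1 ≤ n)
    (δ : ℝ) (hδ0 : 0 < δ) (hδn : δ ≤ n)
    (f : En n → ℝ) (hf : choquetIntegralAbs n δ univ f < ⊤)
    (F : ℕ → En n → ℝ) (hF : ∀ i, choquetIntegralAbs n δ univ (F i) < ⊤)
    (hconv : Tendsto (fun i => choquetIntegralAbs n δ univ (fun x => f x - F i x))
      atTop (𝓝 0)) :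
    ∃ φ : ℕ → ℕ, StrictMono φ ∧
      ∃ E : Set (En n), dyadicContent n δ E = 0 ∧
        ∀ x ∉ E, Tendsto (fun j => F (φ j) x) atTop (𝓝 (f x)) :=
  nL1_convergence_subsequence_general n δ f F hconv
end
end

section
/- Let n ≥ 1 and δ, δ' ∈ (0, n]. If f : ℝⁿ → [0, ∞] satisfies ∫_K f dH̃^δ_∞ < ∞ for every bounded set K ⊆ ℝⁿ, and f(x) = limsup_{r→0⁺} f^δ_{B(x,r)} for H̃^{δ'}_∞-almost every x ∈ ℝⁿ, then f is Lebesgue measurable. -/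
/-!
The limsup `g` of the ball averages is Borel measurable, and `f = g` off a set of zero
`H̃^{δ'}_∞`-content, which is Lebesgue-null since `δ' ≤ n` (a dyadic cube of side `ℓ ≤ 1` has
volume `ℓⁿ ≤ ℓ^{δ'}`).

Measurability of `g` comes from continuity of `H̃^δ_∞` along increasing unions `E_j ↑ E`. Take
near-optimal covers `S_j` of `E_j` and merge them successively, keeping only maximal cubes.
Merging is strongly subadditive: the maximal cubes of `X ∪ Y`, together with the cubes of either
family contained in a cube of the other (a cover of `E_{j-1}`, which lies in both unions), weigh
at most as much as `X` and `Y` together. So the `j`-th merged family costs at most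
`H̃^δ_∞(E_j) + ε`; a cube maximal among all merged families is never discarded, and these cubes
cover `E`. Hence `H̃^δ_∞(B(x,r))` and `∫_{B(x,r)} f dH̃^δ_∞` are lower semicontinuous in `x` and
are suprema over rational radii `q < r`, so the limsup over `r → 0⁺` may be taken along rational
radii.
-/

open MeasureTheory Set Metric Filter Topology
open scoped ENNReal

noncomputable section

namespace DyadicCover

abbrev CubeIndex (n : ℕ) : Type := ℤ × (Fin n → ℤ)

def cube (n : ℕ) (q : CubeIndex n) : Set (En n) := dyadicCube n q.1 q.2

variable {n : ℕ} {δ : ℝ}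

lemma mem_cube_iff {q : CubeIndex n} {x : En n} :
    x ∈ cube n q ↔ ∀ i, ⌊x i / 2 ^ q.1⌋ = q.2 i := by
  have h2 : (0 : ℝ) < 2 ^ q.1 := zpow_pos two_pos _
  refine forall_congr' fun i => ?_
  rw [Int.floor_eq_iff, le_div_iff₀ h2, div_lt_iff₀ h2]

lemma floor_div_two_zpow_of_le {k k' : ℤ} (h : k ≤ k') (x : ℝ) :
    ⌊x / 2 ^ k'⌋ = ⌊x / 2 ^ k⌋ / 2 ^ (k' - k).toNat := by
  have hk' : (2 : ℝ) ^ k' = 2 ^ k * ((2 ^ (k' - k).toNat : ℕ) : ℝ) := by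
    rw [Nat.cast_pow, Nat.cast_ofNat, ← zpow_natCast, Int.toNat_of_nonneg (by omega),
      ← zpow_add₀ two_ne_zero, add_sub_cancel]
  rw [hk', ← div_div, Int.floor_div_natCast]
  norm_cast

lemma cube_subset_of_mem_of_le {q q' : CubeIndex n} {x : En n} (hx : x ∈ cube n q)
    (hx' : x ∈ cube n q') (h : q.1 ≤ q'.1) : cube n q ⊆ cube n q' := by
  intro y hy
  rw [mem_cube_iff] at hx hx' hy ⊢
  intro i
  rw [← hx' i, floor_div_two_zpow_of_le h, floor_div_two_zpow_of_le h, hx i, hy i]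

lemma cube_subset_or_subset {q q' : CubeIndex n}
    (h : (cube n q ∩ cube n q').Nonempty) : cube n q ⊆ cube n q' ∨ cube n q' ⊆ cube n q := by
  obtain ⟨x, hx, hx'⟩ := h
  rcases le_total q.1 q'.1 with hle | hle
  · exact .inl (cube_subset_of_mem_of_le hx hx' hle)
  · exact .inr (cube_subset_of_mem_of_le hx' hx hle)

lemma corner_mem_cube (q : CubeIndex n) :
    WithLp.toLp 2 (fun i => (q.2 i : ℝ) * 2 ^ q.1) ∈ cube n q := by
  rw [mem_cube_iff]
  intro i
  simp [mul_div_cancel_right₀ _ (zpow_pos (two_pos (α := ℝ)) q.1).ne']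

lemma volume_cube (q : CubeIndex n) :
    volume (cube n q) = ENNReal.ofReal (2 ^ q.1) ^ n := by
  have hcube : cube n q = (MeasurableEquiv.toLp 2 (Fin n → ℝ)).symm ⁻¹'
      Set.univ.pi fun i => Ico ((q.2 i : ℝ) * 2 ^ q.1) ((q.2 i + 1) * 2 ^ q.1) := by
    ext x
    simp [cube, dyadicCube]
  rw [hcube, (EuclideanSpace.volume_preserving_symm_measurableEquiv_toLp (Fin n)).measure_preimage
    (MeasurableSet.univ_pi fun _ => measurableSet_Ico).nullMeasurableSet, volume_pi_pi]
  simp [Real.volume_Ico, add_mul]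

lemma level_le_of_cube_subset (hn : 0 < n) {q q' : CubeIndex n}
    (h : cube n q ⊆ cube n q') : q.1 ≤ q'.1 := by
  have hvol := measure_mono (μ := volume) h
  rw [volume_cube, volume_cube, ENNReal.pow_le_pow_left_iff hn.ne',
    ENNReal.ofReal_le_ofReal_iff (zpow_pos two_pos _).le] at hvol
  exact (zpow_le_zpow_iff_right₀ one_lt_two).mp hvol

lemma eq_of_cube_subset_of_level_eq {q q' : CubeIndex n} (h : cube n q ⊆ cube n q')
    (hlevel : q.1 = q'.1) : q = q' := by
  have hc := mem_cube_iff.mp (h (corner_mem_cube q))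
  refine Prod.ext hlevel (funext fun i => ?_)
  rw [← hc i, ← hlevel]
  simp [mul_div_cancel_right₀ _ (zpow_pos (two_pos (α := ℝ)) q.1).ne']

lemma cube_injective (hn : 0 < n) : Function.Injective (cube n) := fun _ _ h =>
  eq_of_cube_subset_of_level_eq h.le
    ((level_le_of_cube_subset hn h.le).antisymm (level_le_of_cube_subset hn h.ge))

lemma level_lt_of_cube_ssubset (hn : 0 < n) {q q' : CubeIndex n}
    (h : cube n q ⊂ cube n q') : q.1 < q'.1 :=
  (level_le_of_cube_subset hn h.subset).lt_of_ne fun hlevel =>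
    h.ne (congrArg (cube n) (eq_of_cube_subset_of_level_eq h.subset hlevel))

def weight (n : ℕ) (δ : ℝ) (q : CubeIndex n) : ℝ≥0∞ := ENNReal.ofReal (((2 : ℝ) ^ q.1) ^ δ)

def cost (n : ℕ) (δ : ℝ) (S : Set (CubeIndex n)) : ℝ≥0∞ := ∑' q, S.indicator (weight n δ) q

lemma cost_mono : Monotone (cost n δ) := fun _ _ h =>
  ENNReal.tsum_le_tsum fun _ => indicator_le_indicator_of_subset h (fun _ => zero_le) _

lemma weight_le_cost {S : Set (CubeIndex n)} {q : CubeIndex n} (h : q ∈ S) :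
    weight n δ q ≤ cost n δ S := by
  simpa [cost, indicator_of_mem h] using ENNReal.le_tsum (f := S.indicator (weight n δ)) q

lemma cost_eq_tsum_subtype (S : Set (CubeIndex n)) : cost n δ S = ∑' q : S, weight n δ q :=
  (tsum_subtype S _).symm

lemma cost_union_add_cost_inter (S T : Set (CubeIndex n)) :
    cost n δ (S ∪ T) + cost n δ (S ∩ T) = cost n δ S + cost n δ T := by
  simp only [cost, ← ENNReal.tsum_add, indicator_union_add_inter_apply]

lemma cost_union_le (S T : Set (CubeIndex n)) : cost n δ (S ∪ T) ≤ cost n δ S + cost n δ T :=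
  le_self_add.trans_eq (cost_union_add_cost_inter S T)

lemma cost_range_le (c : ℕ → CubeIndex n) : cost n δ (range c) ≤ ∑' i, weight n δ (c i) := by
  rw [cost_eq_tsum_subtype]
  exact ENNReal.tsum_le_tsum_comp_of_surjective rangeFactorization_surjective _

lemma cost_iUnion_of_monotone {S : ℕ → Set (CubeIndex n)} (hS : Monotone S) :
    cost n δ (⋃ j, S j) = ⨆ j, cost n δ (S j) := by
  simp only [cost, indicator_iUnion_apply (M := ℝ≥0∞) rfl, ENNReal.tsum_eq_iSup_sum]
  rw [iSup_comm]
  refine iSup_congr fun F => ENNReal.finsetSum_iSup_of_monotone fun q j j' hj => ?_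
  exact indicator_le_indicator_of_subset (hS hj) (fun _ => zero_le) q

lemma tsum_weight_neg_nat_ne_top (hδ : 0 < δ) :
    ∑' k : ℕ, weight n δ (-(k : ℤ), 0) ≠ ⊤ := by
  have hr : (0 : ℝ) ≤ 2⁻¹ ^ δ := by positivity
  have hw : ∀ k : ℕ, weight n δ (-(k : ℤ), 0) = ENNReal.ofReal (2⁻¹ ^ δ) ^ k := fun k => by
    rw [weight, ← ENNReal.ofReal_pow hr, ← Real.rpow_natCast, ← Real.rpow_mul (by norm_num),
      mul_comm, Real.rpow_mul (by norm_num), zpow_neg, zpow_natCast, Real.rpow_natCast, inv_pow]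
  simp only [hw, ENNReal.tsum_geometric, ne_eq, ENNReal.inv_eq_top, tsub_eq_zero_iff_le, not_le]
  rw [ENNReal.ofReal_lt_one]
  exact Real.rpow_lt_one (by norm_num) (by norm_num) hδ

lemma exists_infinite_cost_le (hδ : 0 < δ) {ε : ℝ≥0∞} (hε : ε ≠ 0) :
    ∃ T : Set (CubeIndex n), T.Infinite ∧ T.Countable ∧ cost n δ T ≤ ε := by
  obtain ⟨J, hJ⟩ := ((ENNReal.tendsto_sum_nat_add _
    (tsum_weight_neg_nat_ne_top (n := n) hδ)).eventually
      (eventually_le_nhds (pos_iff_ne_zero.mpr hε))).exists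
  let c : ℕ → CubeIndex n := fun k => (-((k + J : ℕ) : ℤ), 0)
  have hc : Function.Injective c := fun a b h => by simpa [c] using congrArg Prod.fst h
  exact ⟨range c, infinite_range_of_injective hc, countable_range c,
    (cost_range_le c).trans hJ⟩

lemma dyadicContent_le_cost (hδ : 0 < δ) {E : Set (En n)} {S : Set (CubeIndex n)}
    (hS : S.Countable) (hE : E ⊆ interior (⋃ q ∈ S, cube n q)) :
    dyadicContent n δ E ≤ cost n δ S := by
  -- `dyadicContent` sums over sequences, so pad `S` by a cheap infinite family and enumerate
  -- the result bijectively.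
  refine ENNReal.le_of_forall_pos_le_add fun ε hε _ => ?_
  obtain ⟨T, hT, hTc, hTcost⟩ :=
    exists_infinite_cost_le (n := n) hδ (ENNReal.coe_ne_zero.mpr hε.ne')
  have : Countable ↥(S ∪ T) := (hS.union hTc).to_subtype
  have : Infinite ↥(S ∪ T) := (hT.mono subset_union_right).to_subtype
  obtain ⟨_⟩ := nonempty_denumerable ↥(S ∪ T)
  let e : ℕ ≃ ↥(S ∪ T) := (Denumerable.eqv _).symm
  have hcov : E ⊆ interior (⋃ i, cube n (e i)) := by
    refine hE.trans (interior_mono fun y hy => ?_)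
    obtain ⟨q, hq, hyq⟩ := mem_iUnion₂.mp hy
    exact mem_iUnion.mpr ⟨e.symm ⟨q, .inl hq⟩, by simpa using hyq⟩
  calc dyadicContent n δ E ≤ ∑' i, weight n δ (e i) :=
        iInf₂_le (fun i => (e i : CubeIndex n)) hcov
    _ = cost n δ (S ∪ T) := by
        rw [cost_eq_tsum_subtype]; exact e.tsum_eq fun q => weight n δ q
    _ ≤ cost n δ S + cost n δ T := cost_union_le S T
    _ ≤ cost n δ S + ε := by gcongr

lemma exists_cover_cost_lt {E : Set (En n)} {t : ℝ≥0∞} (h : dyadicContent n δ E < t) :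
    ∃ S : Set (CubeIndex n), S.Countable ∧ E ⊆ interior (⋃ q ∈ S, cube n q) ∧
      cost n δ S < t := by
  obtain ⟨c, hc⟩ := iInf_lt_iff.mp h
  obtain ⟨hcov, hlt⟩ := iInf_lt_iff.mp hc
  exact ⟨range c, countable_range c, by rwa [biUnion_range], (cost_range_le c).trans_lt hlt⟩

lemma exists_level_bound (hδ : 0 < δ) {B : ℝ≥0∞} (hB : B ≠ ⊤) :
    ∃ K : ℤ, ∀ q : CubeIndex n, weight n δ q ≤ B → q.1 < K := by
  obtain ⟨K, hK⟩ := pow_unbounded_of_one_lt B.toReal (Real.one_lt_rpow one_lt_two hδ)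
  refine ⟨K, fun q hq => lt_of_not_ge fun hle => hq.not_gt ?_⟩
  rw [weight, ENNReal.lt_ofReal_iff_toReal_lt hB]
  refine hK.trans_le ?_
  rw [← Real.rpow_natCast, ← Real.rpow_mul two_pos.le, mul_comm, Real.rpow_mul two_pos.le,
    Real.rpow_natCast, ← zpow_natCast]
  gcongr
  exact one_le_two

lemma volume_cube_le_weight (hδ : 0 < δ) (hδn : δ ≤ n) {q : CubeIndex n}
    (hq : weight n δ q ≤ 1) : volume (cube n q) ≤ weight n δ q := by
  have h2 : (0 : ℝ) < 2 ^ q.1 := zpow_pos two_pos _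
  have hle : (2 : ℝ) ^ q.1 ≤ 1 := by
    rw [weight, ENNReal.ofReal_le_one] at hq
    exact le_of_not_gt fun h => hq.not_gt (Real.one_lt_rpow h hδ)
  rw [volume_cube, weight, ← ENNReal.ofReal_pow h2.le, ← Real.rpow_natCast]
  exact ENNReal.ofReal_le_ofReal (Real.rpow_le_rpow_of_exponent_ge h2 hle hδn)

def maxCubes (S : Set (CubeIndex n)) : Set (CubeIndex n) :=
  {q | q ∈ S ∧ ∀ q' ∈ S, ¬cube n q ⊂ cube n q'}

lemma maxCubes_subset (S : Set (CubeIndex n)) : maxCubes S ⊆ S := fun _ h => h.1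

lemma exists_maxCubes_superset (hn : 0 < n) {S : Set (CubeIndex n)} {K : ℤ}
    (hK : ∀ q ∈ S, q.1 < K) {q : CubeIndex n} (hq : q ∈ S) :
    ∃ p ∈ maxCubes S, cube n q ⊆ cube n p := by
  have hwf : WellFounded fun a b : CubeIndex n => cube n b ⊂ cube n a ∧ a.1 < K :=
    Subrelation.wf (fun {a b} h => by
      have := level_lt_of_cube_ssubset hn h.1
      change (K - a.1).toNat < (K - b.1).toNat
      omega) (measure fun a : CubeIndex n => (K - a.1).toNat).wf
  obtain ⟨p, ⟨hpS, hqp⟩, hmin⟩ := hwf.has_min {p | p ∈ S ∧ cube n q ⊆ cube n p} ⟨q, hq, subset_rfl⟩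
  exact ⟨p, ⟨hpS, fun p' hp' hpp' => hmin p' ⟨hp', hqp.trans hpp'.subset⟩ ⟨hpp', hK p' hp'⟩⟩, hqp⟩

lemma biUnion_maxCubes (hn : 0 < n) {S : Set (CubeIndex n)} {K : ℤ} (hK : ∀ q ∈ S, q.1 < K) :
    ⋃ q ∈ maxCubes S, cube n q = ⋃ q ∈ S, cube n q := by
  refine (biUnion_subset_biUnion_left (maxCubes_subset S)).antisymm fun x hx => ?_
  obtain ⟨q, hq, hxq⟩ := mem_iUnion₂.mp hx
  obtain ⟨p, hp, hqp⟩ := exists_maxCubes_superset hn hK hq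
  exact mem_iUnion₂.mpr ⟨p, hp, hqp hxq⟩

def interCubes (X Y : Set (CubeIndex n)) : Set (CubeIndex n) :=
  {q | q ∈ X ∧ ∃ q' ∈ Y, cube n q ⊆ cube n q'} ∪ {q | q ∈ Y ∧ ∃ q' ∈ X, cube n q ⊂ cube n q'}

lemma interCubes_subset (X Y : Set (CubeIndex n)) : interCubes X Y ⊆ X ∪ Y := by
  rintro q (h | h)
  exacts [.inl h.1, .inr h.1]

lemma maxCubes_inter_interCubes_subset (hn : 0 < n) (X Y : Set (CubeIndex n)) :
    maxCubes (X ∪ Y) ∩ interCubes X Y ⊆ X ∩ Y := by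
  rintro q ⟨⟨-, hmax⟩, ⟨hX, q', hq', hsub⟩ | ⟨hY, q', hq', hsub⟩⟩
  · obtain rfl : q = q' := cube_injective hn (hsub.eq_of_not_ssubset (hmax q' (.inr hq')))
    exact ⟨hX, hq'⟩
  · exact absurd hsub (hmax q' (.inl hq'))

lemma inter_subset_biUnion_interCubes (X Y : Set (CubeIndex n)) :
    (⋃ q ∈ X, cube n q) ∩ (⋃ q ∈ Y, cube n q) ⊆ ⋃ q ∈ interCubes X Y, cube n q := by
  rintro x ⟨hx, hy⟩
  obtain ⟨q, hq, hxq⟩ := mem_iUnion₂.mp hx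
  obtain ⟨q', hq', hxq'⟩ := mem_iUnion₂.mp hy
  refine mem_iUnion₂.mpr ?_
  rcases cube_subset_or_subset ⟨x, hxq, hxq'⟩ with h | h
  · exact ⟨q, .inl ⟨hq, q', hq', h⟩, hxq⟩
  · rcases h.ssubset_or_eq with h | h
    · exact ⟨q', .inr ⟨hq', q, hq, h⟩, hxq'⟩
    · exact ⟨q, .inl ⟨hq, q', hq', h.ge⟩, hxq⟩

lemma cost_maxCubes_union_add_dyadicContent_le (hn : 0 < n) (hδ : 0 < δ)
    {X Y : Set (CubeIndex n)} (hX : X.Countable) (hY : Y.Countable) {A : Set (En n)}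
    (hAX : A ⊆ interior (⋃ q ∈ X, cube n q)) (hAY : A ⊆ interior (⋃ q ∈ Y, cube n q)) :
    cost n δ (maxCubes (X ∪ Y)) + dyadicContent n δ A ≤ cost n δ X + cost n δ Y := by
  have hA : A ⊆ interior (⋃ q ∈ interCubes X Y, cube n q) :=
    (subset_inter hAX hAY).trans (interior_inter.symm.subset.trans
      (interior_mono (inter_subset_biUnion_interCubes X Y)))
  calc cost n δ (maxCubes (X ∪ Y)) + dyadicContent n δ A
      ≤ cost n δ (maxCubes (X ∪ Y)) + cost n δ (interCubes X Y) := by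
        gcongr
        exact dyadicContent_le_cost hδ ((hX.union hY).mono (interCubes_subset X Y)) hA
    _ = cost n δ (maxCubes (X ∪ Y) ∪ interCubes X Y) +
          cost n δ (maxCubes (X ∪ Y) ∩ interCubes X Y) := (cost_union_add_cost_inter _ _).symm
    _ ≤ cost n δ (X ∪ Y) + cost n δ (X ∩ Y) := by
        gcongr
        · exact cost_mono (union_subset (maxCubes_subset _) (interCubes_subset X Y))
        · exact cost_mono (maxCubes_inter_interCubes_subset hn X Y)
    _ = cost n δ X + cost n δ Y := cost_union_add_cost_inter X Y

section Accumulation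

variable {S : ℕ → Set (CubeIndex n)} {K : ℤ}

def accumCubes (S : ℕ → Set (CubeIndex n)) : ℕ → Set (CubeIndex n)
  | 0 => maxCubes (S 0)
  | j + 1 => maxCubes (accumCubes S j ∪ S (j + 1))

lemma accumCubes_subset_iUnion (S : ℕ → Set (CubeIndex n)) (j : ℕ) :
    accumCubes S j ⊆ ⋃ i, S i := by
  induction j with
  | zero => exact (maxCubes_subset _).trans (subset_iUnion S 0)
  | succ j ih => exact (maxCubes_subset _).trans (union_subset ih (subset_iUnion S _))

lemma biUnion_subset_biUnion_accumCubes (hn : 0 < n) (hK : ∀ q ∈ ⋃ i, S i, q.1 < K) (j : ℕ) :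
    ⋃ q ∈ S j, cube n q ⊆ ⋃ q ∈ accumCubes S j, cube n q := by
  cases j with
  | zero => exact (biUnion_maxCubes hn fun q hq => hK q (mem_iUnion_of_mem 0 hq)).ge
  | succ j =>
    rw [accumCubes, biUnion_maxCubes hn fun q hq =>
      hK q (union_subset (accumCubes_subset_iUnion S j) (subset_iUnion S _) hq), biUnion_union]
    exact subset_union_right

lemma cost_accumCubes_le (hn : 0 < n) (hδ : 0 < δ) {E : ℕ → Set (En n)} (hE : Monotone E)
    (hS : ∀ j, (S j).Countable) (hES : ∀ j, E j ⊆ interior (⋃ q ∈ S j, cube n q))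
    (hK : ∀ q ∈ ⋃ i, S i, q.1 < K) (hfin : ∀ j, dyadicContent n δ (E j) ≠ ⊤)
    {c : ℕ → ℝ≥0∞} (hcost : ∀ j, cost n δ (S j) ≤ dyadicContent n δ (E j) + c j) (j : ℕ) :
    cost n δ (accumCubes S j) ≤ dyadicContent n δ (E j) + ∑ i ∈ Finset.range (j + 1), c i := by
  induction j with
  | zero => simpa [accumCubes] using (cost_mono (maxCubes_subset _)).trans (hcost 0)
  | succ j ih =>
    have hcount : (accumCubes S j).Countable :=
      (countable_iUnion hS).mono (accumCubes_subset_iUnion S j)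
    have hcov : E j ⊆ interior (⋃ q ∈ accumCubes S j, cube n q) :=
      (hES j).trans (interior_mono (biUnion_subset_biUnion_accumCubes hn hK j))
    have key := cost_maxCubes_union_add_dyadicContent_le hn hδ hcount (hS (j + 1)) hcov
      ((hE j.le_succ).trans (hES (j + 1)))
    refine (ENNReal.add_le_add_iff_right (hfin j)).mp (key.trans ?_)
    calc cost n δ (accumCubes S j) + cost n δ (S (j + 1))
        ≤ (dyadicContent n δ (E j) + ∑ i ∈ Finset.range (j + 1), c i) +
            (dyadicContent n δ (E (j + 1)) + c (j + 1)) := add_le_add ih (hcost _)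
      _ = _ := by rw [Finset.sum_range_succ _ (j + 1)]; ring

lemma mem_accumCubes_succ (hn : 0 < n) (hK : ∀ q ∈ ⋃ i, S i, q.1 < K) {p : CubeIndex n}
    (hp : p ∈ maxCubes (⋃ j, accumCubes S j)) {j : ℕ} (hj : p ∈ accumCubes S j) :
    p ∈ accumCubes S (j + 1) := by
  refine ⟨.inl hj, fun q hq hpq => ?_⟩
  obtain ⟨q', hq', hqq'⟩ := exists_maxCubes_superset hn (fun q hq =>
    hK q (union_subset (accumCubes_subset_iUnion S j) (subset_iUnion S _) hq)) hq
  exact hp.2 q' (mem_iUnion_of_mem (j + 1) hq') (hpq.trans_subset hqq')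

lemma cost_maxCubes_iUnion_accumCubes_le (hn : 0 < n) (hK : ∀ q ∈ ⋃ i, S i, q.1 < K) :
    cost n δ (maxCubes (⋃ j, accumCubes S j)) ≤ ⨆ j, cost n δ (accumCubes S j) := by
  set D := maxCubes (⋃ j, accumCubes S j)
  have hmono : Monotone fun j => D ∩ accumCubes S j :=
    monotone_nat_of_le_succ fun j p hp => ⟨hp.1, mem_accumCubes_succ hn hK hp.1 hp.2⟩
  calc cost n δ D = cost n δ (⋃ j, D ∩ accumCubes S j) := by
        rw [← inter_iUnion, inter_eq_left.mpr (maxCubes_subset _)]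
    _ = ⨆ j, cost n δ (D ∩ accumCubes S j) := cost_iUnion_of_monotone hmono
    _ ≤ ⨆ j, cost n δ (accumCubes S j) := iSup_mono fun j => cost_mono inter_subset_right

lemma biUnion_subset_biUnion_maxCubes_iUnion_accumCubes (hn : 0 < n)
    (hK : ∀ q ∈ ⋃ i, S i, q.1 < K) (j : ℕ) :
    ⋃ q ∈ S j, cube n q ⊆ ⋃ q ∈ maxCubes (⋃ j, accumCubes S j), cube n q := by
  rw [biUnion_maxCubes hn fun q hq => hK q (iUnion_subset (accumCubes_subset_iUnion S) hq)]
  exact (biUnion_subset_biUnion_accumCubes hn hK j).trans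
    (biUnion_subset_biUnion_left (subset_iUnion _ j))

end Accumulation

end DyadicCover

open DyadicCover

lemma dyadicContent_mono_s8 {n : ℕ} {δ : ℝ} : Monotone (dyadicContent n δ) := fun _ _ h =>
  le_iInf₂ fun c hc => iInf₂_le c (h.trans hc)

lemma volume_eq_zero_of_dyadicContent_eq_zero {n : ℕ} {δ : ℝ} (hδ : 0 < δ) (hδn : δ ≤ n)
    {E : Set (En n)} (h : dyadicContent n δ E = 0) : volume E = 0 := by
  refine le_antisymm (ENNReal.le_of_forall_pos_le_add fun ε hε _ => ?_) zero_le
  have hlt : dyadicContent n δ E < min (ε : ℝ≥0∞) 1 := h ▸ lt_min (by exact_mod_cast hε) one_pos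
  obtain ⟨S, hSc, hcov, hcost⟩ := exists_cover_cost_lt hlt
  have hcost1 : cost n δ S ≤ 1 := hcost.le.trans (min_le_right _ _)
  calc volume E ≤ volume (⋃ q ∈ S, cube n q) := measure_mono (hcov.trans interior_subset)
    _ ≤ ∑' q : S, volume (cube n q) := measure_biUnion_le _ hSc _
    _ ≤ ∑' q : S, weight n δ q := ENNReal.tsum_le_tsum fun q =>
        volume_cube_le_weight hδ hδn ((weight_le_cost q.2).trans hcost1)
    _ = cost n δ S := (cost_eq_tsum_subtype S).symm
    _ ≤ 0 + ε := by rw [zero_add]; exact hcost.le.trans (min_le_left _ _)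

theorem dyadicContent_iUnion_le_iSup {n : ℕ} {δ : ℝ} (hn : 0 < n) (hδ : 0 < δ)
    {E : ℕ → Set (En n)} (hE : Monotone E) :
    dyadicContent n δ (⋃ j, E j) ≤ ⨆ j, dyadicContent n δ (E j) := by
  set M := ⨆ j, dyadicContent n δ (E j)
  rcases eq_or_ne M ⊤ with hM | hM
  · exact hM ▸ le_top
  refine ENNReal.le_of_forall_pos_le_add fun ε hε _ => ?_
  obtain ⟨c, hc0, hcε⟩ := ENNReal.exists_pos_sum_of_countable' (ENNReal.coe_ne_zero.mpr hε.ne') ℕ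
  have hEM : ∀ j, dyadicContent n δ (E j) ≤ M := le_iSup fun j => dyadicContent n δ (E j)
  have hfin : ∀ j, dyadicContent n δ (E j) ≠ ⊤ := fun j => ne_top_of_le_ne_top hM (hEM j)
  choose S hS hES hcost using fun j =>
    exists_cover_cost_lt (ENNReal.lt_add_right (hfin j) (hc0 j).ne')
  obtain ⟨K, hK⟩ := exists_level_bound (n := n) hδ (ENNReal.add_ne_top.mpr ⟨hM, ENNReal.coe_ne_top⟩)
  have hSK : ∀ q ∈ ⋃ j, S j, q.1 < K := fun q hq => by
    obtain ⟨j, hj⟩ := mem_iUnion.mp hq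
    exact hK q ((weight_le_cost hj).trans ((hcost j).le.trans
      (add_le_add (hEM j) ((ENNReal.le_tsum j).trans hcε.le))))
  calc dyadicContent n δ (⋃ j, E j) ≤ cost n δ (maxCubes (⋃ j, accumCubes S j)) :=
        dyadicContent_le_cost hδ ((countable_iUnion hS).mono
          ((maxCubes_subset _).trans (iUnion_subset (accumCubes_subset_iUnion S))))
          (iUnion_subset fun j => (hES j).trans
            (interior_mono (biUnion_subset_biUnion_maxCubes_iUnion_accumCubes hn hSK j)))
    _ ≤ ⨆ j, cost n δ (accumCubes S j) := cost_maxCubes_iUnion_accumCubes_le hn hSK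
    _ ≤ M + ε := iSup_le fun j =>
        (cost_accumCubes_le hn hδ hE hS hES hSK hfin (fun j => (hcost j).le) j).trans
          (add_le_add (hEM j) ((ENNReal.sum_le_tsum _).trans hcε.le))

section BallSetFunction

variable {X : Type*} [PseudoMetricSpace X] {φ : Set X → ℝ≥0∞}

lemma apply_ball_le_iSup_rat (hφ : Monotone φ)
    (hcont : ∀ s : ℕ → Set X, Monotone s → φ (⋃ i, s i) ≤ ⨆ i, φ (s i)) (x : X) {r : ℝ}
    (hr : 0 < r) : φ (ball x r) ≤ ⨆ (q : ℚ) (_ : (q : ℝ) ∈ Ioo 0 r), φ (ball x q) := by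
  obtain ⟨u, hu, hu_mem, hu_lim⟩ := exists_seq_strictMono_tendsto' hr
  have hball : ball x r = ⋃ k, ball x (u k) := by
    ext y
    simp only [mem_ball, mem_iUnion]
    exact ⟨fun h => (hu_lim.eventually (lt_mem_nhds h)).exists,
      fun ⟨k, hk⟩ => hk.trans (hu_mem k).2⟩
  rw [hball]
  refine (hcont _ fun i j h => ball_subset_ball (hu.monotone h)).trans (iSup_le fun k => ?_)
  obtain ⟨q, hq1, hq2⟩ := exists_rat_btwn (hu_mem k).2
  exact (hφ (ball_subset_ball hq1.le)).trans
    (le_iSup₂_of_le (f := fun (q : ℚ) (_ : (q : ℝ) ∈ Ioo 0 r) => φ (ball x q)) q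
      ⟨(hu_mem k).1.trans hq1, hq2⟩ le_rfl)

lemma lowerSemicontinuous_apply_ball (hφ : Monotone φ)
    (hcont : ∀ s : ℕ → Set X, Monotone s → φ (⋃ i, s i) ≤ ⨆ i, φ (s i)) {r : ℝ}
    (hr : 0 < r) : LowerSemicontinuous fun x => φ (ball x r) := by
  intro x a ha
  obtain ⟨q, hq, haq⟩ : ∃ q : ℚ, (q : ℝ) ∈ Ioo 0 r ∧ a < φ (ball x q) := by
    simpa [lt_iSup_iff] using ha.trans_le (apply_ball_le_iSup_rat hφ hcont x hr)
  filter_upwards [ball_mem_nhds x (sub_pos.mpr hq.2)] with y hy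
  refine haq.trans_le (hφ (ball_subset_ball' ?_))
  rw [dist_comm]
  linarith [mem_ball.mp hy]

end BallSetFunction

lemma limsup_nhdsGT_zero_eq_iInf_iSup_rat {F : ℝ → ℝ≥0∞}
    (hF : ∀ r, 0 < r → F r ≤ ⨆ (q : ℚ) (_ : (q : ℝ) ∈ Ioo 0 r), F q) :
    limsup F (𝓝[>] 0) = ⨅ m : ℕ, ⨆ (q : ℚ) (_ : (q : ℝ) ∈ Ioo 0 (1 / ((m : ℝ) + 1))), F q := by
  rw [(nhdsGT_basis 0).limsup_eq_iInf_iSup]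
  apply le_antisymm
  · refine le_iInf fun m => (iInf₂_le (1 / ((m : ℝ) + 1)) (by positivity)).trans
      (iSup₂_le fun r hr => (hF r hr.1).trans
        (iSup₂_mono' fun q hq => ⟨q, ⟨hq.1, hq.2.trans hr.2⟩, le_rfl⟩))
  · refine le_iInf₂ fun p hp => ?_
    obtain ⟨m, hm⟩ := exists_nat_one_div_lt hp
    exact (iInf_le _ m).trans (iSup₂_mono' fun q hq => ⟨q, ⟨hq.1, hq.2.trans hm⟩, le_rfl⟩)

section ChoquetIntegral

variable {n : ℕ} {δ : ℝ}

lemma choquetIntegral_mono_set (f : En n → ℝ≥0∞) :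
    Monotone fun Ω => choquetIntegral n δ Ω f := fun _ _ h =>
  lintegral_mono fun _ => dyadicContent_mono_s8 fun _ hy => ⟨h hy.1, hy.2⟩

lemma choquetIntegral_iUnion_le_iSup (hn : 0 < n) (hδ : 0 < δ) (f : En n → ℝ≥0∞)
    {Ω : ℕ → Set (En n)} (hΩ : Monotone Ω) :
    choquetIntegral n δ (⋃ j, Ω j) f ≤ ⨆ j, choquetIntegral n δ (Ω j) f := by
  have hlevel : ∀ t : ℝ, dyadicContent n δ {x | x ∈ ⋃ j, Ω j ∧ ENNReal.ofReal t < f x} ≤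
      ⨆ j, dyadicContent n δ {x | x ∈ Ω j ∧ ENNReal.ofReal t < f x} := fun t => by
    have hunion : {x | x ∈ ⋃ j, Ω j ∧ ENNReal.ofReal t < f x} =
        ⋃ j, {x | x ∈ Ω j ∧ ENNReal.ofReal t < f x} := by
      ext x
      simp
    rw [hunion]
    exact dyadicContent_iUnion_le_iSup hn hδ fun i j h x hx => ⟨hΩ h hx.1, hx.2⟩
  refine (lintegral_mono hlevel).trans_eq (lintegral_iSup (fun j => ?_) ?_)
  · exact Antitone.measurable fun t t' h => dyadicContent_mono_s8 fun x hx =>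
      ⟨hx.1, (ENNReal.ofReal_le_ofReal h).trans_lt hx.2⟩
  · exact fun i j h t => dyadicContent_mono_s8 fun x hx => ⟨hΩ h hx.1, hx.2⟩

lemma choquetIntegral_eq_zero_of_dyadicContent_eq_zero {Ω : Set (En n)}
    (h : dyadicContent n δ Ω = 0) (f : En n → ℝ≥0∞) : choquetIntegral n δ Ω f = 0 :=
  nonpos_iff_eq_zero.mp ((lintegral_mono fun _ =>
    (dyadicContent_mono_s8 fun _ hy => hy.1).trans h.le).trans_eq lintegral_zero)

lemma choquetIntegral_le_div_mul_dyadicContent {Ω : Set (En n)}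
    (hΩ : dyadicContent n δ Ω ≠ ⊤) (f : En n → ℝ≥0∞) :
    choquetIntegral n δ Ω f ≤
      choquetIntegral n δ Ω f / dyadicContent n δ Ω * dyadicContent n δ Ω := by
  rcases eq_or_ne (dyadicContent n δ Ω) 0 with h0 | h0
  · simp [choquetIntegral_eq_zero_of_dyadicContent_eq_zero h0]
  · exact (ENNReal.div_mul_cancel h0 hΩ).ge

lemma measurable_ballAvg (hn : 0 < n) (hδ : 0 < δ) (f : En n → ℝ≥0∞) {r : ℝ} (hr : 0 < r) :
    Measurable fun x => ballAvg n δ f x r :=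
  (lowerSemicontinuous_apply_ball (choquetIntegral_mono_set f)
      (fun _ hs => choquetIntegral_iUnion_le_iSup hn hδ f hs) hr).measurable.div
    (lowerSemicontinuous_apply_ball dyadicContent_mono_s8
      (fun _ hs => dyadicContent_iUnion_le_iSup hn hδ hs) hr).measurable

lemma ballAvg_le_iSup_rat (hn : 0 < n) (hδ : 0 < δ) (f : En n → ℝ≥0∞) (x : En n) {r : ℝ}
    (hr : 0 < r) : ballAvg n δ f x r ≤ ⨆ (q : ℚ) (_ : (q : ℝ) ∈ Ioo 0 r), ballAvg n δ f x q := by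
  rcases eq_or_ne (dyadicContent n δ (ball x r)) ⊤ with htop | htop
  · simp [ballAvg, htop] -- `a / ⊤ = 0` in `ℝ≥0∞`
  refine ENNReal.div_le_of_le_mul ((apply_ball_le_iSup_rat (choquetIntegral_mono_set f)
    (fun _ hs => choquetIntegral_iUnion_le_iSup hn hδ f hs) x hr).trans (iSup₂_le fun q hq => ?_))
  have hsub := dyadicContent_mono_s8 (δ := δ) (ball_subset_ball hq.2.le (x := x))
  exact (choquetIntegral_le_div_mul_dyadicContent (ne_top_of_le_ne_top htop hsub) f).trans
    (mul_le_mul' (le_iSup₂_of_le (f := fun (q : ℚ) (_ : (q : ℝ) ∈ Ioo 0 r) => ballAvg n δ f x q)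
      q hq le_rfl) hsub)

lemma measurable_limsupAvg (hn : 0 < n) (hδ : 0 < δ) (f : En n → ℝ≥0∞) :
    Measurable (limsupAvg n δ f) := by
  have hlim : limsupAvg n δ f = fun x =>
      ⨅ m : ℕ, ⨆ (q : ℚ) (_ : (q : ℝ) ∈ Ioo 0 (1 / ((m : ℝ) + 1))), ballAvg n δ f x q :=
    funext fun x => limsup_nhdsGT_zero_eq_iInf_iSup_rat fun _ hr => ballAvg_le_iSup_rat hn hδ f x hr
  rw [hlim]
  exact .iInf fun m => .iSup fun q => .iSup fun hq => measurable_ballAvg hn hδ f hq.1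

end ChoquetIntegral

theorem limsup_avg_eq_implies_lebesgue_measurable_general (n : ℕ) (hn : 1 ≤ n)
    (δ δ' : ℝ) (hδ0 : 0 < δ) (hδ'0 : 0 < δ') (hδ'n : δ' ≤ n)
    (f : En n → ℝ≥0∞)
    (hae : ∃ E : Set (En n), dyadicContent n δ' E = 0 ∧
      ∀ x ∉ E, f x = limsupAvg n δ f x) :
    NullMeasurable f (volume : Measure (En n)) := by
  obtain ⟨E, hE0, hfE⟩ := hae
  have hE : volume E = 0 := volume_eq_zero_of_dyadicContent_eq_zero hδ'0 hδ'n hE0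
  refine (measurable_limsupAvg hn hδ0 f).nullMeasurable.congr (ae_iff.mpr ?_)
  exact measure_mono_null (fun x hx => by_contra fun hxE => hx (hfE x hxE).symm) hE

/-- if a nonnegative locally `nL¹(H̃^δ_∞)` function coincides
`H̃^{δ'}_∞`-almost everywhere with the limsup of its `δ`-dimensional ball averages,
then it is Lebesgue measurable. -/
theorem limsup_avg_eq_implies_lebesgue_measurable (n : ℕ) (hn : 1 ≤ n)
    (δ δ' : ℝ) (hδ0 : 0 < δ) (hδn : δ ≤ n) (hδ'0 : 0 < δ') (hδ'n : δ' ≤ n)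
    (f : En n → ℝ≥0∞)
    (hf : ∀ K : Set (En n), Bornology.IsBounded K → choquetIntegral n δ K f < ⊤)
    (hae : ∃ E : Set (En n), dyadicContent n δ' E = 0 ∧
      ∀ x ∉ E, f x = limsupAvg n δ f x) :
    NullMeasurable f (volume : Measure (En n)) :=
  limsup_avg_eq_implies_lebesgue_measurable_general n hn δ δ' hδ0 hδ'0 hδ'n f hae

end
end
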